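/- Assume M ≠ N. For u ∈ ℂ with (u−a_m)² ≠ ħ² for every m, the monodromy matrix 𝒯(u) is invertible; write 𝒯'_{ab}(u) for the block entries of 𝒯(u)⁻¹. Then v⁺ = e₁⊗⋯⊗e₁ is a highest weight vector for the inverse monodromy matrix: 𝒯'_{kl}(u)v⁺ = 0 for k > l, and for each 1 ≤ k ≤ n, whenever the denominators below are nonzero, 𝒯'_{kk}(u)v⁺ = λ'_k(u)·v⁺ with λ'_k(u) = (Π_{m=1}^{k−1} λ_m(u+ħc_m)) / (Π_{m=1}^{k} λ_m(u+ħc_{m−1})), where λ₁(u) = Π_{m=1}^L (u−a_m−ħ), λ_k(u) = Π_{m=1}^L (u−a_m) for 2 ≤ k ≤ n, c₀ = 0 and c_k = Σ_{l=1}^k (−1)^{[l]}. -/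

import Mathlib

open scoped BigOperators

noncomputable section

namespace SuperSpin

/-- The ℤ₂-grading on `Fin n` (0-indexed): grade `0` for the first `M` indices,
grade `1` for the remaining ones.  `gr M i` is the grade of the (paper, 1-indexed)
index `i+1`. -/
def gr (M : ℕ) {n : ℕ} (i : Fin n) : ℕ := if (i : ℕ) < M then 0 else 1

/-- `End(V ⊗ V)` for `V = ℂⁿ`, as matrices indexed by pairs. -/
abbrev E2 (n : ℕ) := Matrix (Fin n × Fin n) (Fin n × Fin n) ℂ

/-- The graded permutation operator `P (e_c ⊗ e_d) = (-1)^{[c][d]} e_d ⊗ e_c`. -/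
def Pm (M n : ℕ) : E2 n :=
  Matrix.of fun p q =>
    if p.1 = q.2 ∧ p.2 = q.1 then ((-1 : ℂ) ^ (gr M q.1 * gr M q.2)) else 0

/-- The R-matrix `R(u) = u·id - hb·P`. -/
def Rm (M n : ℕ) (hb u : ℂ) : E2 n := u • (1 : E2 n) - hb • Pm M n

/-- The operator `Q (e_c ⊗ e_d) = δ_{cd} (-1)^{[d]} ∑_a e_a ⊗ e_a`. -/
def Qm (M n : ℕ) : E2 n :=
  Matrix.of fun p q => if q.1 = q.2 ∧ p.1 = p.2 then ((-1 : ℂ) ^ (gr M q.2)) else 0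

/-- Graded partial transposition in the second tensor factor. -/
def pt2 (M n : ℕ) (X : E2 n) : E2 n :=
  Matrix.of fun p q =>
    ((-1 : ℂ) ^ (gr M p.2 * gr M q.2 + gr M q.2)) * X (p.1, q.2) (q.1, p.2)

/-- Graded transposition of an `n × n` matrix: `(Aᵗ)_{ij} = (-1)^{[i][j]+[j]} A_{ji}`. -/
def gTr (M : ℕ) {n : ℕ} (A : Matrix (Fin n) (Fin n) ℂ) : Matrix (Fin n) (Fin n) ℂ :=
  Matrix.of fun i j => ((-1 : ℂ) ^ (gr M i * gr M j + gr M j)) * A j i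

/-- `A ⊗ id` acting on `V ⊗ V`. -/
def m1 {n : ℕ} (A : Matrix (Fin n) (Fin n) ℂ) : E2 n :=
  Matrix.of fun p q => A p.1 q.1 * (if p.2 = q.2 then 1 else 0)

/-- `id ⊗ A` acting on `V ⊗ V`. -/
def m2 {n : ℕ} (A : Matrix (Fin n) (Fin n) ℂ) : E2 n :=
  Matrix.of fun p q => (if p.1 = q.1 then 1 else 0) * A p.2 q.2

/-- `R₂₁(x) = P ∘ R(x) ∘ P`. -/
def R21 (M n : ℕ) (hb u : ℂ) : E2 n := Pm M n * Rm M n hb u * Pm M n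

/-- The graded reflection equation for a matrix-valued function `K`. -/
def GRE (M n : ℕ) (hb : ℂ) (K : ℂ → Matrix (Fin n) (Fin n) ℂ) : Prop :=
  ∀ u v : ℂ,
    Rm M n hb (u - v) * m1 (K u) * R21 M n hb (u + v) * m2 (K v)
      = m2 (K v) * Rm M n hb (u + v) * m1 (K u) * R21 M n hb (u - v)

/-- `End(V^{⊗m})`, with basis indexed by functions `Fin m → Fin n`. -/
abbrev Ten (n m : ℕ) := Matrix (Fin m → Fin n) (Fin m → Fin n) ℂ

/-- The Koszul embedding of `X ∈ End(V ⊗ V)` acting on the factors `i < j` of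
`V^{⊗ m}` (identity on the other factors, with the graded crossing signs produced
by conjugation with the adjacent graded permutation operators). -/
def kEmb (M n m : ℕ) (i j : Fin m) (X : E2 n) : Ten n m :=
  Matrix.of fun f g =>
    (if ∀ l, l ≠ i → l ≠ j → f l = g l then (1 : ℂ) else 0)
      * X (f i, f j) (g i, g j)
      * (-1 : ℂ) ^ ((gr M (f j) + gr M (g j)) *
          ∑ l ∈ Finset.univ.filter (fun l => i < l ∧ l < j), gr M (g l))

/-- The monodromy matrix `𝒯(u) = R_{1,2}(u-a₁) ⋯ R_{1,L+1}(u-a_L)` of the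
inhomogeneous fundamental chain, acting on `V ⊗ H = V^{⊗(L+1)}` (auxiliary space
in position `0`). -/
def Tmono (M n L : ℕ) (hb : ℂ) (a : Fin L → ℂ) (u : ℂ) : Ten n (L + 1) :=
  (List.ofFn fun k : Fin L => kEmb M n (L + 1) 0 k.succ (Rm M n hb (u - a k))).prod

/-- The block entry `X_{ab} ∈ End(H)` of an operator `X` on `V ⊗ H`. -/
def blk {n L : ℕ} (X : Ten n (L + 1)) (a b : Fin n) : Ten n L :=
  Matrix.of fun f g => X (Fin.cons a f) (Fin.cons b g)

/-- Supertrace transfer matrix `st(u) = ∑ (-1)^{[a]} 𝒯_{aa}(u)`. -/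
def stm (M n L : ℕ) (hb : ℂ) (a : Fin L → ℂ) (u : ℂ) : Ten n L :=
  ∑ i : Fin n, ((-1 : ℂ) ^ gr M i) • blk (Tmono M n L hb a u) i i

/-- Trace transfer matrix `t(u) = ∑ 𝒯_{aa}(u)`. -/
def tm (M n L : ℕ) (hb : ℂ) (a : Fin L → ℂ) (u : ℂ) : Ten n L :=
  ∑ i : Fin n, blk (Tmono M n L hb a u) i i

/-- The pseudovacuum `v⁺ = e₁ ⊗ ⋯ ⊗ e₁`. -/
def vplus (n L : ℕ) : (Fin L → Fin n) → ℂ :=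
  fun f => if ∀ l, (f l : ℕ) = 0 then 1 else 0

/-- The pseudovacuum weights `λ_j(w)` (paper index `j ≥ 1`):
`λ₁(w) = ∏ (w - a_m - hb)`, `λ_j(w) = ∏ (w - a_m)` for `j ≥ 2`. -/
def lamP (L : ℕ) (hb : ℂ) (a : Fin L → ℂ) (j : ℕ) (w : ℂ) : ℂ :=
  if j = 1 then ∏ m, (w - a m - hb) else ∏ m, (w - a m)

/-- `c_m = ∑_{l=1}^m (-1)^{[l]}` (so `c_0 = 0`). -/
def cP (M : ℕ) (m : ℕ) : ℂ := ∑ l ∈ Finset.range m, (if l < M then (1 : ℂ) else -1)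

/-- `λ'_k(w) = ∏_{m=1}^{k-1} λ_m(w + hb c_m) / ∏_{m=1}^{k} λ_m(w + hb c_{m-1})`
(paper index `k ≥ 1`). -/
def lamPr (M L : ℕ) (hb : ℂ) (a : Fin L → ℂ) (k : ℕ) (w : ℂ) : ℂ :=
  (∏ m ∈ Finset.Icc 1 (k - 1), lamP L hb a m (w + hb * cP M m)) /
    (∏ m ∈ Finset.Icc 1 k, lamP L hb a m (w + hb * cP M (m - 1)))

/-- The global generators `Δ(E_{ab}) = ∑_k E_{ab}^{(k)}` on `H = V^{⊗L}`. -/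
def Delta (M n L : ℕ) (a b : Fin n) : Ten n L :=
  ∑ k : Fin L, Matrix.of fun f g =>
    if f k = a ∧ g k = b ∧ ∀ l, l ≠ k → f l = g l then
      (-1 : ℂ) ^ ((gr M a + gr M b) *
        ∑ l ∈ Finset.univ.filter (fun l => l < k), gr M (g l))
    else 0

/-- The diagonal entry (at paper index `j`, `1 ≤ j ≤ n`) of the diagonal boundary
matrix with parameter `ξ` and blocks determined by `L₁ ≤ L₂`. -/
def kdval (ξ : ℂ) (L₁ L₂ : ℕ) (j : ℕ) (u : ℂ) : ℂ :=
  if L₁ < j ∧ j ≤ L₂ then u + ξ else ξ - u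

/-- The diagonal boundary matrix `K(u)`. -/
def Kdiag (n : ℕ) (ξ : ℂ) (L₁ L₂ : ℕ) (u : ℂ) : Matrix (Fin n) (Fin n) ℂ :=
  Matrix.diagonal fun j => kdval ξ L₁ L₂ ((j : ℕ) + 1) u

/-- An `n × n` matrix acting on the auxiliary (first) factor of `V^{⊗(L+1)}`. -/
def onAux {n L : ℕ} (A : Matrix (Fin n) (Fin n) ℂ) : Ten n (L + 1) :=
  Matrix.of fun f g => A (f 0) (g 0) * (if ∀ l, l ≠ 0 → f l = g l then 1 else 0)

/-- The double-row monodromy matrix `ℬ(u) = 𝒯(u) (K(u) ⊗ id_H) 𝒯(-u)⁻¹`. -/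
def Bmono (M n L : ℕ) (hb : ℂ) (a : Fin L → ℂ) (ξ : ℂ) (L₁ L₂ : ℕ) (u : ℂ) :
    Ten n (L + 1) :=
  Tmono M n L hb a u * onAux (Kdiag n ξ L₁ L₂ u) * (Tmono M n L hb a (-u))⁻¹

/-- The open-chain transfer matrix `b(u) = ∑ (-1)^{[a]} K⁺_{aa}(u) ℬ_{aa}(u)`. -/
def bop (M n L : ℕ) (hb : ℂ) (a : Fin L → ℂ) (ξ : ℂ) (L₁ L₂ : ℕ)
    (ξ' : ℂ) (L₁' L₂' : ℕ) (u : ℂ) : Ten n L :=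
  ∑ i : Fin n,
    (((-1 : ℂ) ^ gr M i) * Kdiag n ξ' L₁' L₂' u i i) •
      blk (Bmono M n L hb a ξ L₁ L₂ u) i i

/-- The functions `g_k(u)` of the open-chain pseudovacuum (paper index `k ≥ 1`). -/
def gP (M : ℕ) (hb ξ : ℂ) (L₁ L₂ : ℕ) (k : ℕ) (u : ℂ) : ℂ :=
  if k ≤ L₁ then ξ - u
  else if k ≤ L₂ then ξ + u - hb * cP M L₁
  else ξ - u - hb * (cP M L₁ - cP M L₂)

/-- The functions `a_k(u)` of the open-chain pseudovacuum (paper index `k ≥ 1`). -/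
def aP (M L : ℕ) (hb : ℂ) (a : Fin L → ℂ) (k : ℕ) (u : ℂ) : ℂ :=
  (if k ≤ M then (1 : ℂ) else -1) * hb *
    (2 * u * lamP L hb a k u * lamPr M L hb a k (-u)) /
    ((2 * u - hb * cP M k) * (2 * u - hb * cP M (k - 1)))

/-!
Since `R(w) R(-w) = (ħ² - w²)`, every factor of `𝒯(u)` is invertible and `𝒯(u)⁻¹` is the
reversed product of the factors `R_{1,j}(u - a_j)⁻¹ = (ħ² - (u - a_j)²)⁻¹ R_{1,j}(a_j - u)`.
As `[1] = 0`, such a factor multiplies `e₁ ⊗ e₁` by `(w - ħ)⁻¹` (where `w = u - a_j`), and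
sends `e_l ⊗ e₁` (`l ≠ 1`) to `w / ((w - ħ)(w + ħ))` times itself plus a multiple of
`e₁ ⊗ e_l`. Applying the factors one site at a time to `e_l ⊗ v⁺`, an excitation moved from the
auxiliary space to site `j` is never touched again, since the later factors act on sites whose
factor is still `e₁`. So `𝒯(u)⁻¹ (e_l ⊗ v⁺)` is `∏_j w_j / ((w_j - ħ)(w_j + ħ)) · e_l ⊗ v⁺`
plus terms with auxiliary factor `e₁` (and exactly `∏_j (w_j - ħ)⁻¹ · e₁ ⊗ v⁺` for `l = 1`),
which gives the triangularity; in `λ'_k` all but three of the factors `λ_m` cancel, leaving the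
same products.
-/

open scoped Matrix

section RMatrix

variable {M n : ℕ}

lemma gr_zero [NeZero n] (hM : 1 ≤ M) : gr M (0 : Fin n) = 0 :=
  if_pos (by rw [Fin.val_zero]; omega)

lemma Rm_apply (hb w : ℂ) (p q : Fin n × Fin n) :
    Rm M n hb w p q = w * (if p = q then 1 else 0)
      - hb * (if p.1 = q.2 ∧ p.2 = q.1 then (-1 : ℂ) ^ (gr M q.1 * gr M q.2) else 0) := by
  simp [Rm, Pm, Matrix.one_apply, mul_ite]

lemma Pm_mul_Pm : Pm M n * Pm M n = 1 := by
  ext p q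
  rw [Matrix.mul_apply, Finset.sum_eq_single (p.2, p.1)]
  · by_cases h : p = q
    · subst h
      simp only [Pm, Matrix.of_apply, Matrix.one_apply_eq, and_self, if_true, ← pow_add]
      rw [show gr M p.2 * gr M p.1 + gr M p.1 * gr M p.2 = 2 * (gr M p.1 * gr M p.2) by ring,
        pow_mul, neg_one_sq, one_pow]
    · have : ¬(p.2 = q.2 ∧ p.1 = q.1) := fun h' => h (Prod.ext h'.2 h'.1)
      simp [Pm, h, this]
  · rintro r - hr
    have : ¬(p.1 = r.2 ∧ p.2 = r.1) := fun h' => hr (Prod.ext h'.2.symm h'.1.symm)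
    simp [Pm, this]
  · simp

lemma Rm_mul_Rm_neg (hb w : ℂ) :
    Rm M n hb w * Rm M n hb (-w) = (hb ^ 2 - w ^ 2) • (1 : E2 n) := by
  simp only [Rm, sub_mul, mul_sub, smul_mul_assoc, mul_smul_comm, Pm_mul_Pm,
    one_mul, mul_one]
  module

lemma Rm_mul_smul_Rm_neg {hb w : ℂ} (hw : w ^ 2 ≠ hb ^ 2) :
    Rm M n hb w * ((hb ^ 2 - w ^ 2)⁻¹ • Rm M n hb (-w)) = 1 := by
  rw [mul_smul_comm, Rm_mul_Rm_neg, smul_smul, inv_mul_cancel₀ (sub_ne_zero.mpr hw.symm),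
    one_smul]

lemma Rm_inv {hb w : ℂ} (hw : w ^ 2 ≠ hb ^ 2) :
    (Rm M n hb w)⁻¹ = (hb ^ 2 - w ^ 2)⁻¹ • Rm M n hb (-w) :=
  Matrix.inv_eq_right_inv (Rm_mul_smul_Rm_neg hw)

lemma Rm_mul_inv {hb w : ℂ} (hw : w ^ 2 ≠ hb ^ 2) : Rm M n hb w * (Rm M n hb w)⁻¹ = 1 := by
  rw [Rm_inv hw, Rm_mul_smul_Rm_neg hw]

lemma Rm_inv_col_zero [NeZero n] (hM : 1 ≤ M) {hb w : ℂ} (hw : w ^ 2 ≠ hb ^ 2) :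
    ((Rm M n hb w)⁻¹).col (0, 0) = Pi.single (0, 0) (w - hb)⁻¹ := by
  have hw₁ : w - hb ≠ 0 := fun h => hw (by rw [sub_eq_zero.mp h])
  have hw₂ : w + hb ≠ 0 := fun h => hw (by rw [eq_neg_of_add_eq_zero_left h]; ring)
  ext p
  rw [Rm_inv hw, Matrix.col_apply, Matrix.smul_apply, Rm_apply, smul_eq_mul]
  by_cases hp : p = (0, 0)
  · subst hp
    simp only [if_true, and_self, Pi.single_eq_same, gr_zero hM, mul_zero, pow_zero]
    field_simp
    ring
  · have : ¬(p.1 = 0 ∧ p.2 = 0) := fun h => hp (Prod.ext h.1 h.2)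
    simp [hp, this]

lemma Rm_inv_apply_single [NeZero n] {hb w : ℂ} (hw : w ^ 2 ≠ hb ^ 2) {l a : Fin n} (b : Fin n)
    (ha : a ≠ 0) :
    (Rm M n hb w)⁻¹ (a, b) (l, 0) = if (a, b) = (l, 0) then w / ((w - hb) * (w + hb)) else 0 := by
  rw [Rm_inv hw, Matrix.smul_apply, Rm_apply, smul_eq_mul]
  simp only [ha, false_and, if_false, mul_zero, sub_zero]
  split_ifs
  · rw [show hb ^ 2 - w ^ 2 = -((w - hb) * (w + hb)) by ring, inv_neg]
    ring
  · simp

end RMatrix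

section KoszulEmbedding

variable {M n m : ℕ}

lemma neg_one_pow_add_mul_trans (x y z s : ℕ) :
    (-1 : ℂ) ^ ((x + z) * s) * (-1) ^ ((z + y) * s) = (-1) ^ ((x + y) * s) := by
  rw [← pow_add, show (x + z) * s + (z + y) * s = (x + y) * s + 2 * (z * s) by ring, pow_add,
    pow_mul (-1 : ℂ) 2, neg_one_sq, one_pow, mul_one]

lemma sum_filter_eqOff_eq_sum_update {α : Type*} [AddCommMonoid α] {i j : Fin m} (hij : i ≠ j)
    (g : Fin m → Fin n) (F : (Fin m → Fin n) → α) :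
    ∑ h ∈ Finset.univ.filter (fun h => ∀ l, l ≠ i → l ≠ j → h l = g l), F h
      = ∑ p : Fin n × Fin n, F (Function.update (Function.update g i p.1) j p.2) := by
  symm
  refine Finset.sum_nbij' (fun p => Function.update (Function.update g i p.1) j p.2)
    (fun h => (h i, h j)) ?_ (fun _ _ => Finset.mem_univ _) ?_ ?_ (fun _ _ => rfl)
  · intro p _
    simp only [Finset.mem_filter, Finset.mem_univ, true_and]
    intro l hli hlj
    rw [Function.update_of_ne hlj, Function.update_of_ne hli]
  · intro p _
    simp [Function.update_of_ne hij]
  · intro h hh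
    simp only [Finset.mem_filter, Finset.mem_univ, true_and] at hh
    funext l
    by_cases hlj : l = j
    · subst hlj; simp
    by_cases hli : l = i
    · subst hli; simp [Function.update_of_ne hlj]
    rw [Function.update_of_ne hlj, Function.update_of_ne hli, hh l hli hlj]

lemma kEmb_mul {i j : Fin m} (hij : i ≠ j) (X Y : E2 n) :
    kEmb M n m i j X * kEmb M n m i j Y = kEmb M n m i j (X * Y) := by
  ext f g
  simp only [kEmb, Matrix.mul_apply, Matrix.of_apply]
  by_cases hfg : ∀ l, l ≠ i → l ≠ j → f l = g l
  swap
  · refine (Finset.sum_eq_zero fun h _ => ?_).trans (by simp [hfg])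
    by_cases hf : ∀ l, l ≠ i → l ≠ j → f l = h l
    · have hh : ¬∀ l, l ≠ i → l ≠ j → h l = g l :=
        fun hh => hfg fun l hli hlj => (hf l hli hlj).trans (hh l hli hlj)
      simp [hh]
    · simp [hf]
  rw [← Finset.sum_filter_of_ne (p := fun h => ∀ l, l ≠ i → l ≠ j → h l = g l)
    (fun h _ hne => by by_contra hh; simp [hh] at hne), sum_filter_eqOff_eq_sum_update hij,
    if_pos hfg, one_mul, Finset.sum_mul]
  refine Finset.sum_congr rfl fun p _ => ?_
  set h := Function.update (Function.update g i p.1) j p.2 with h_def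
  have hhg : ∀ l, l ≠ i → l ≠ j → h l = g l := fun l hli hlj => by
    rw [h_def, Function.update_of_ne hlj, Function.update_of_ne hli]
  have hσ : ∑ l ∈ Finset.univ.filter (fun l => i < l ∧ l < j), gr M (h l)
      = ∑ l ∈ Finset.univ.filter (fun l => i < l ∧ l < j), gr M (g l) :=
    Finset.sum_congr rfl fun l hl => by
      simp only [Finset.mem_filter, Finset.mem_univ, true_and] at hl
      rw [hhg l hl.1.ne' hl.2.ne]
  have hhi : h i = p.1 := by simp [h, Function.update_of_ne hij]
  have hhj : h j = p.2 := by simp [h]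
  rw [if_pos fun l hli hlj => (hfg l hli hlj).trans (hhg l hli hlj).symm, if_pos hhg, hσ,
    hhi, hhj, ← neg_one_pow_add_mul_trans (gr M (f j)) (gr M (g j)) (gr M p.2)]
  ring

lemma kEmb_one {i j : Fin m} (hij : i ≠ j) : kEmb M n m i j (1 : E2 n) = 1 := by
  ext f g
  simp only [kEmb, Matrix.of_apply, Matrix.one_apply]
  by_cases h : f = g
  · subst h
    simp only [implies_true, if_true, mul_one, ← two_mul, mul_assoc, pow_mul,
      neg_one_sq, one_pow]
  rw [if_neg h]
  by_cases hoff : ∀ l, l ≠ i → l ≠ j → f l = g l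
  · have hne : (f i, f j) ≠ (g i, g j) := fun he => h <| funext fun l => by
      by_cases hli : l = i
      · subst hli; exact congrArg Prod.fst he
      by_cases hlj : l = j
      · subst hlj; exact congrArg Prod.snd he
      exact hoff l hli hlj
    simp [hne]
  · simp [hoff]

lemma kEmb_inv_of_mul_eq_one {i j : Fin m} (hij : i ≠ j) {X Y : E2 n} (h : X * Y = 1) :
    (kEmb M n m i j X)⁻¹ = kEmb M n m i j Y :=
  Matrix.inv_eq_right_inv (by rw [kEmb_mul hij, h, kEmb_one hij])

lemma isUnit_kEmb_of_mul_eq_one {i j : Fin m} (hij : i ≠ j) {X Y : E2 n} (h : X * Y = 1) :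
    IsUnit (kEmb M n m i j X) :=
  IsUnit.of_mul_eq_one _ (by rw [kEmb_mul hij, h, kEmb_one hij])

lemma kEmb_apply_eq_zero {i j : Fin m} (X : E2 n) {f g : Fin m → Fin n} {l : Fin m}
    (hli : l ≠ i) (hlj : l ≠ j) (hfg : f l ≠ g l) : kEmb M n m i j X f g = 0 := by
  have : ¬∀ l, l ≠ i → l ≠ j → f l = g l := fun h => hfg (h l hli hlj)
  simp [kEmb, this]

end KoszulEmbedding

section Pseudovacuum

variable {M n m : ℕ} [NeZero n]

def vacuumOutside (U : Set (Fin m)) : Submodule ℂ ((Fin m → Fin n) → ℂ) :=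
  Submodule.pi {r | ∃ j ∉ U, r j ≠ 0} fun _ => ⊥

lemma mem_vacuumOutside {U : Set (Fin m)} {v : (Fin m → Fin n) → ℂ} :
    v ∈ vacuumOutside U ↔ ∀ r : Fin m → Fin n, ∀ j ∉ U, r j ≠ 0 → v r = 0 := by
  simp only [vacuumOutside, Submodule.mem_pi, Submodule.mem_bot, Set.mem_ofPred_eq]
  exact ⟨fun h r j hj hrj => h r ⟨j, hj, hrj⟩, fun h r ⟨j, hj, hrj⟩ => h r j hj hrj⟩

lemma vacuumOutside_mono {U U' : Set (Fin m)} (h : U ⊆ U') :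
    vacuumOutside (n := n) U ≤ vacuumOutside U' := fun _ hv =>
  mem_vacuumOutside.mpr fun r j hj => mem_vacuumOutside.mp hv r j (fun hjU => hj (h hjU))

lemma single_zero_mem_vacuumOutside (U : Set (Fin m)) :
    Pi.single (0 : Fin m → Fin n) (1 : ℂ) ∈ vacuumOutside U :=
  mem_vacuumOutside.mpr fun _ j _ hrj =>
    Pi.single_eq_of_ne (fun h => hrj (congrFun h j)) _

variable [NeZero m] {p : Fin m} {X : E2 n}

lemma kEmb_apply_of_vacuum (hM : 1 ≤ M) (hp : p ≠ 0) {μ : ℂ}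
    (hX : X.col (0, 0) = Pi.single (0, 0) μ) (f : Fin m → Fin n) {g : Fin m → Fin n}
    (hg0 : g 0 = 0) (hgp : g p = 0) : kEmb M n m 0 p X f g = if f = g then μ else 0 := by
  have hXf : X (f 0, f p) (0, 0) = (Pi.single (0, 0) μ : Fin n × Fin n → ℂ) (f 0, f p) :=
    congrFun hX _
  by_cases hfg : f = g
  · subst hfg
    rw [hg0, hgp, Pi.single_eq_same] at hXf
    simp [kEmb, hg0, hgp, hXf, gr_zero hM]
  rw [if_neg hfg]
  by_cases hoff : ∀ l, l ≠ 0 → l ≠ p → f l = g l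
  · have hne : (f 0, f p) ≠ (0, 0) := fun h => hfg <| funext fun l => by
      by_cases hl0 : l = 0
      · subst hl0; rw [hg0]; exact congrArg Prod.fst h
      by_cases hlp : l = p
      · subst hlp; rw [hgp]; exact congrArg Prod.snd h
      exact hoff l hl0 hlp
    simp [kEmb, hg0, hgp, hXf, hne]
  · simp [kEmb, hoff]

lemma kEmb_mulVec_of_mem_vacuumOutside (hM : 1 ≤ M) (hp : p ≠ 0) {μ : ℂ}
    (hX : X.col (0, 0) = Pi.single (0, 0) μ) {U : Set (Fin m)} (h0 : 0 ∉ U) (hpU : p ∉ U)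
    {v : (Fin m → Fin n) → ℂ} (hv : v ∈ vacuumOutside U) :
    kEmb M n m 0 p X *ᵥ v = μ • v := by
  have hterm : ∀ f g, kEmb M n m 0 p X f g * v g = if f = g then μ * v g else 0 := by
    intro f g
    by_cases hvg : v g = 0
    · simp [hvg]
    have hvac : ∀ j ∈ ({0, p} : Set (Fin m)), g j = 0 := fun j hj => by
      by_contra hgj
      exact hvg (mem_vacuumOutside.mp hv g j (by rcases hj with rfl | rfl <;> assumption) hgj)
    rw [kEmb_apply_of_vacuum hM hp hX f (hvac 0 (by simp)) (hvac p (by simp)), ite_mul,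
      zero_mul]
  ext f
  simp [Matrix.mulVec, dotProduct, hterm]

lemma kEmb_apply_single_of_aux_ne_zero (hM : 1 ≤ M) (hp : p ≠ 0) {l : Fin n} {ν : ℂ}
    (hX : ∀ a b, a ≠ 0 → X (a, b) (l, 0) = if (a, b) = (l, 0) then ν else 0)
    {f : Fin m → Fin n} (hf : f 0 ≠ 0) :
    kEmb M n m 0 p X f (Pi.single 0 l) = if f = Pi.single 0 l then ν else 0 := by
  have hsign : ∑ t ∈ Finset.univ.filter (fun t => 0 < t ∧ t < p),
      gr M ((Pi.single 0 l : Fin m → Fin n) t) = 0 :=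
    Finset.sum_eq_zero fun t ht => by
      rw [Pi.single_eq_of_ne (Finset.mem_filter.mp ht).2.1.ne', gr_zero hM]
  simp only [kEmb, Matrix.of_apply, hsign, mul_zero, pow_zero, mul_one, Pi.single_eq_same,
    Pi.single_eq_of_ne hp, hX _ _ hf]
  by_cases hfx : f = Pi.single 0 l
  · subst hfx
    simp [Pi.single_eq_of_ne hp]
  rw [if_neg hfx]
  by_cases hoff : ∀ t, t ≠ 0 → t ≠ p → f t = (Pi.single 0 l : Fin m → Fin n) t
  · have hne : (f 0, f p) ≠ (l, 0) := fun h => hfx <| funext fun t => by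
      by_cases ht0 : t = 0
      · subst ht0; simpa using congrArg Prod.fst h
      by_cases htp : t = p
      · subst htp; simpa [Pi.single_eq_of_ne hp] using congrArg Prod.snd h
      exact hoff t ht0 htp
    simp [hne]
  · simp [hoff]

lemma kEmb_mulVec_single (hM : 1 ≤ M) (hp : p ≠ 0) {l : Fin n} {ν : ℂ}
    (hX : ∀ a b, a ≠ 0 → X (a, b) (l, 0) = if (a, b) = (l, 0) then ν else 0) :
    ∃ v ∈ vacuumOutside {p}, kEmb M n m 0 p X *ᵥ Pi.single (Pi.single 0 l) 1
      = ν • Pi.single (Pi.single 0 l) 1 + v := by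
  refine ⟨_, mem_vacuumOutside.mpr fun r j hj hrj => ?_, (add_sub_cancel _ _).symm⟩
  rw [Pi.sub_apply, Matrix.mulVec_single_one, Matrix.col_apply, Pi.smul_apply, sub_eq_zero]
  by_cases hj0 : j = 0
  · subst hj0
    rw [kEmb_apply_single_of_aux_ne_zero hM hp hX hrj]
    by_cases hr : r = Pi.single 0 l <;> simp [hr]
  · have hrj' : r j ≠ (Pi.single 0 l : Fin m → Fin n) j := by
      rwa [Pi.single_eq_of_ne hj0]
    rw [kEmb_apply_eq_zero X hj0 hj hrj',
      Pi.single_eq_of_ne (fun h => hrj' (congrFun h j)), smul_zero]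

end Pseudovacuum

section SiteProducts

variable {M n m : ℕ} [NeZero n] [NeZero m] {ι : Type*} (site : ι → Fin m) (X : ι → E2 n)

lemma list_prod_kEmb_mulVec_of_mem_vacuumOutside (hM : 1 ≤ M) {μ : ι → ℂ} :
    ∀ S : List ι, (∀ i ∈ S, site i ≠ 0) →
      (∀ i ∈ S, (X i).col (0, 0) = Pi.single (0, 0) (μ i)) →
      ∀ {U : Set (Fin m)}, 0 ∉ U → (∀ i ∈ S, site i ∉ U) →
      ∀ {v : (Fin m → Fin n) → ℂ}, v ∈ vacuumOutside U →
      (S.map fun i => kEmb M n m 0 (site i) (X i)).prod *ᵥ v = (S.map μ).prod • v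
  | [], _, _, _, _, _, _, _ => by simp
  | i :: S, hS0, hX, U, h0, hSU, v, hv => by
    simp only [List.mem_cons, forall_eq_or_imp] at hS0 hX hSU
    rw [List.map_cons, List.prod_cons, ← Matrix.mulVec_mulVec,
      list_prod_kEmb_mulVec_of_mem_vacuumOutside hM S hS0.2 hX.2 h0 hSU.2 hv,
      Matrix.mulVec_smul, kEmb_mulVec_of_mem_vacuumOutside hM hS0.1 hX.1 h0 hSU.1 hv,
      smul_smul, List.map_cons, List.prod_cons, mul_comm]

lemma list_prod_kEmb_mulVec_single (hM : 1 ≤ M) {μ ν : ι → ℂ} {l : Fin n} :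
    ∀ S : List ι, (S.map site).Nodup → (∀ i ∈ S, site i ≠ 0) →
      (∀ i ∈ S, (X i).col (0, 0) = Pi.single (0, 0) (μ i)) →
      (∀ i ∈ S, ∀ a b, a ≠ 0 → X i (a, b) (l, 0) = if (a, b) = (l, 0) then ν i else 0) →
      ∃ v ∈ vacuumOutside {j | j ∈ S.map site},
        (S.map fun i => kEmb M n m 0 (site i) (X i)).prod *ᵥ Pi.single (Pi.single 0 l) 1
          = (S.map ν).prod • Pi.single (Pi.single 0 l) 1 + v
  | [], _, _, _, _ => ⟨0, Submodule.zero_mem _, by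
    rw [List.map_nil, List.prod_nil, Matrix.one_mulVec, List.map_nil, List.prod_nil, one_smul,
      add_zero]⟩
  | i :: S, hnd, hS0, hvac, hX => by
    rw [List.map_cons, List.nodup_cons] at hnd
    simp only [List.mem_cons, forall_eq_or_imp] at hS0 hvac hX
    obtain ⟨v, hv, hSv⟩ := list_prod_kEmb_mulVec_single hM S hnd.2 hS0.2 hvac.2 hX.2
    obtain ⟨v', hv', hiv'⟩ := kEmb_mulVec_single hM hS0.1 hX.1
    have hSU : site i ∉ {j | j ∈ S.map site} := hnd.1
    have h0 : (0 : Fin m) ∉ {j | j ∈ S.map site} := fun h => by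
      obtain ⟨k, hk, hk0⟩ := List.mem_map.mp h
      exact hS0.2 k hk hk0
    refine ⟨(S.map ν).prod • v' + μ i • v, Submodule.add_mem _
      (Submodule.smul_mem _ _
        (vacuumOutside_mono (Set.singleton_subset_iff.mpr List.mem_cons_self) hv'))
      (Submodule.smul_mem _ _ (vacuumOutside_mono (fun _ hj => List.mem_cons_of_mem _ hj) hv)),
      ?_⟩
    rw [List.map_cons, List.prod_cons, ← Matrix.mulVec_mulVec, hSv, Matrix.mulVec_add,
      Matrix.mulVec_smul, hiv', kEmb_mulVec_of_mem_vacuumOutside hM hS0.1 hvac.1 h0 hSU hv,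
      List.map_cons, List.prod_cons, smul_add, smul_smul, mul_comm, add_assoc]

lemma list_prod_kEmb_mulVec_single_apply (hM : 1 ≤ M) {μ ν : ι → ℂ} {l : Fin n} (S : List ι)
    (hnd : (S.map site).Nodup) (hS0 : ∀ i ∈ S, site i ≠ 0)
    (hvac : ∀ i ∈ S, (X i).col (0, 0) = Pi.single (0, 0) (μ i))
    (hX : ∀ i ∈ S, ∀ a b, a ≠ 0 → X i (a, b) (l, 0) = if (a, b) = (l, 0) then ν i else 0)
    {r : Fin m → Fin n} (hr : r 0 ≠ 0) :
    ((S.map fun i => kEmb M n m 0 (site i) (X i)).prod *ᵥ Pi.single (Pi.single 0 l) 1) r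
      = if r = Pi.single 0 l then (S.map ν).prod else 0 := by
  obtain ⟨v, hv, hSv⟩ := list_prod_kEmb_mulVec_single site X hM S hnd hS0 hvac hX
  have h0 : (0 : Fin m) ∉ {j | j ∈ S.map site} := fun h => by
    obtain ⟨k, hk, hk0⟩ := List.mem_map.mp h
    exact hS0 k hk hk0
  rw [hSv, Pi.add_apply, mem_vacuumOutside.mp hv r 0 h0 hr, add_zero, Pi.smul_apply,
    Pi.single_apply, smul_eq_mul]
  split_ifs <;> simp

end SiteProducts

section Monodromy

variable {M n L : ℕ} {hb u : ℂ} {a : Fin L → ℂ}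

lemma Tmono_inv (hu : ∀ k, (u - a k) ^ 2 ≠ hb ^ 2) :
    (Tmono M n L hb a u)⁻¹ = ((List.finRange L).reverse.map fun k =>
      kEmb M n (L + 1) 0 k.succ (Rm M n hb (u - a k))⁻¹).prod := by
  rw [Tmono, Matrix.list_prod_inv_reverse, List.ofFn_eq_map, ← List.map_reverse, List.map_map]
  congr 2
  funext k
  exact kEmb_inv_of_mul_eq_one (Fin.succ_ne_zero k).symm (Rm_mul_inv (hu k))

lemma isUnit_Tmono (hu : ∀ k, (u - a k) ^ 2 ≠ hb ^ 2) : IsUnit (Tmono M n L hb a u) :=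
  List.prod_isUnit fun _ hA => by
    obtain ⟨k, rfl⟩ := List.mem_ofFn.mp hA
    exact isUnit_kEmb_of_mul_eq_one (Fin.succ_ne_zero k).symm (Rm_mul_inv (hu k))

variable [NeZero n]

lemma Tmono_inv_mulVec_vacuum (hM : 1 ≤ M) (hu : ∀ k, (u - a k) ^ 2 ≠ hb ^ 2) :
    (Tmono M n L hb a u)⁻¹ *ᵥ Pi.single 0 1 = (∏ k, (u - a k - hb))⁻¹ • Pi.single 0 1 := by
  rw [Tmono_inv hu, list_prod_kEmb_mulVec_of_mem_vacuumOutside Fin.succ _ hM _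
    (fun k _ => Fin.succ_ne_zero k) (fun k _ => Rm_inv_col_zero hM (hu k))
    (Set.notMem_empty 0) (fun _ _ => Set.notMem_empty _) (single_zero_mem_vacuumOutside ∅),
    List.map_reverse, List.prod_reverse, ← Fin.prod_univ_def, Finset.prod_inv_distrib]

lemma Tmono_inv_mulVec_single_apply (hM : 1 ≤ M) (hu : ∀ k, (u - a k) ^ 2 ≠ hb ^ 2)
    (l : Fin n) {r : Fin (L + 1) → Fin n} (hr : r 0 ≠ 0) :
    ((Tmono M n L hb a u)⁻¹ *ᵥ Pi.single (Pi.single 0 l) 1) r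
      = if r = Pi.single 0 l then
          (∏ k, (u - a k)) / ((∏ k, (u - a k - hb)) * ∏ k, (u - a k + hb))
        else 0 := by
  rw [Tmono_inv hu, list_prod_kEmb_mulVec_single_apply Fin.succ _ hM _
    ((List.nodup_reverse.mpr (List.nodup_finRange L)).map (Fin.succ_injective L))
    (fun k _ => Fin.succ_ne_zero k) (fun k _ => Rm_inv_col_zero hM (hu k))
    (fun k _ _ b ha => Rm_inv_apply_single (hu k) b ha) hr,
    List.map_reverse, List.prod_reverse, ← Fin.prod_univ_def, Finset.prod_div_distrib,
    Finset.prod_mul_distrib]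

end Monodromy

section Weights

variable {M L : ℕ} {hb : ℂ} {a : Fin L → ℂ}

lemma prod_Icc_one_eq_prod_range (K : ℕ) (f : ℕ → ℂ) :
    ∏ m ∈ Finset.Icc 1 K, f m = ∏ i ∈ Finset.range K, f (i + 1) := by
  rw [Finset.range_eq_Ico, Finset.prod_Ico_add', ← Finset.Ico_add_one_right_eq_Icc, zero_add]

lemma lamPr_one (w : ℂ) : lamPr M L hb a 1 w = (∏ m, (w - a m - hb))⁻¹ := by
  simp [lamPr, lamP, cP]

lemma lamPr_of_two_le (hM : 1 ≤ M) {k : ℕ} (hk : 2 ≤ k) {w : ℂ}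
    (hden : ∏ m ∈ Finset.Icc 1 k, lamP L hb a m (w + hb * cP M (m - 1)) ≠ 0) :
    lamPr M L hb a k w
      = (∏ m, (w - a m)) / ((∏ m, (w - a m - hb)) * ∏ m, (w - a m + hb)) := by
  obtain ⟨j, rfl⟩ := Nat.exists_eq_add_of_le' hk
  have hc0 : cP M 0 = 0 := by simp [cP]
  have hc1 : cP M 1 = 1 := by simp [cP, Nat.pos_iff_ne_zero.mp hM]
  rw [prod_Icc_one_eq_prod_range] at hden
  rw [lamPr, show j + 2 - 1 = j + 1 from rfl, prod_Icc_one_eq_prod_range,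
    prod_Icc_one_eq_prod_range]
  simp only [Finset.prod_range_succ', Nat.add_sub_cancel, lamP, hc0, hc1, mul_zero, mul_one,
    add_zero, zero_add, Nat.add_eq_right, Nat.add_one_ne_zero, ↓reduceIte, ne_eq, mul_eq_zero,
    not_or] at hden ⊢
  rw [mul_assoc, mul_div_mul_left _ _ hden.1.1, mul_comm]
  simp only [add_sub_cancel_right, add_sub_right_comm w hb]

end Weights

section Blocks

variable {n L : ℕ} [NeZero n]

lemma vplus_eq_single : vplus n L = Pi.single 0 1 := by
  ext f
  simp only [vplus, Pi.single_apply, funext_iff, Pi.zero_apply, Fin.ext_iff, Fin.val_zero]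

lemma cons_zero_eq_single (l : Fin n) :
    (Fin.cons l 0 : Fin (L + 1) → Fin n) = Pi.single 0 l := by
  ext j
  cases j using Fin.cases <;> simp

lemma cons_eq_single_iff {k l : Fin n} {f : Fin L → Fin n} :
    (Fin.cons k f : Fin (L + 1) → Fin n) = Pi.single 0 l ↔ k = l ∧ f = 0 := by
  rw [← cons_zero_eq_single, Fin.cons_inj]

lemma blk_mulVec_vplus_apply (X : Ten n (L + 1)) (k l : Fin n) (f : Fin L → Fin n) :
    (blk X k l *ᵥ vplus n L) f = (X *ᵥ Pi.single (Pi.single 0 l) 1) (Fin.cons k f) := by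
  rw [vplus_eq_single, Matrix.mulVec_single_one, Matrix.mulVec_single_one,
    ← cons_zero_eq_single]
  rfl

end Blocks

theorem statement12_general (M N : ℕ) (hM : 1 ≤ M)
    (hb : ℂ) (L : ℕ) (sh : Fin L → ℂ) (u : ℂ)
    (hu : ∀ m : Fin L, (u - sh m) ^ 2 ≠ hb ^ 2) :
    IsUnit (Tmono M (M + N) L hb sh u) ∧
    (∀ k l : Fin (M + N), l < k →
      (blk ((Tmono M (M + N) L hb sh u)⁻¹) k l).mulVec (vplus (M + N) L) = 0) ∧
    (∀ k : Fin (M + N),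
      (∏ m ∈ Finset.Icc 1 ((k : ℕ) + 1), lamP L hb sh m (u + hb * cP M (m - 1))) ≠ 0 →
      (blk ((Tmono M (M + N) L hb sh u)⁻¹) k k).mulVec (vplus (M + N) L)
        = lamPr M L hb sh ((k : ℕ) + 1) u • vplus (M + N) L) := by
  have : NeZero (M + N) := ⟨by omega⟩
  refine ⟨isUnit_Tmono hu, fun k l hlk => ?_, fun k hden => ?_⟩
  · have hk : k ≠ 0 := (lt_of_le_of_lt (Fin.zero_le l) hlk).ne'
    ext f
    rw [blk_mulVec_vplus_apply, Tmono_inv_mulVec_single_apply hM hu l (by simpa using hk),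
      if_neg fun h => hlk.ne' (cons_eq_single_iff.mp h).1, Pi.zero_apply]
  ext f
  rw [blk_mulVec_vplus_apply, Pi.smul_apply, vplus_eq_single]
  rcases eq_or_ne k 0 with rfl | hk
  · rw [Pi.single_zero, Tmono_inv_mulVec_vacuum hM hu, Fin.val_zero, zero_add, lamPr_one]
    have hf : (Fin.cons 0 f : Fin (L + 1) → Fin (M + N)) = 0 ↔ f = 0 := by
      simpa using cons_eq_single_iff (k := 0) (l := 0) (f := f)
    simp [Pi.single_apply, hf]
  · rw [Tmono_inv_mulVec_single_apply hM hu k (by simpa using hk),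
      lamPr_of_two_le hM (by simpa [Nat.succ_le_succ_iff, Nat.one_le_iff_ne_zero] using hk) hden]
    simp [cons_eq_single_iff, Pi.single_apply]

/-- For `M ≠ N` and `(u - a_m)² ≠ ħ²` for all `m`, the
monodromy matrix `𝒯(u)` is invertible, `v⁺` is a highest weight vector for
`𝒯(u)⁻¹`, and the diagonal blocks act on `v⁺` by
`λ'_k(u) = ∏_{m<k} λ_m(u + ħ c_m) / ∏_{m≤k} λ_m(u + ħ c_{m-1})`
(whenever the denominators are nonzero). -/
theorem statement12 (M N : ℕ) (hM : 1 ≤ M) (hN : 1 ≤ N) (hMN : M ≠ N)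
    (hb : ℂ) (hhb : hb ≠ 0) (L : ℕ) (hL : 1 ≤ L) (sh : Fin L → ℂ) (u : ℂ)
    (hu : ∀ m : Fin L, (u - sh m) ^ 2 ≠ hb ^ 2) :
    IsUnit (Tmono M (M + N) L hb sh u) ∧
    (∀ k l : Fin (M + N), l < k →
      (blk ((Tmono M (M + N) L hb sh u)⁻¹) k l).mulVec (vplus (M + N) L) = 0) ∧
    (∀ k : Fin (M + N),
      (∏ m ∈ Finset.Icc 1 ((k : ℕ) + 1), lamP L hb sh m (u + hb * cP M (m - 1))) ≠ 0 →
      (blk ((Tmono M (M + N) L hb sh u)⁻¹) k k).mulVec (vplus (M + N) L)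
        = lamPr M L hb sh ((k : ℕ) + 1) u • vplus (M + N) L) :=
  statement12_general M N hM hb L sh u hu

end SuperSpin
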